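/- arXiv:1001.4868 — 2 statements merged into one kernel-verified Lean document; each statement's English description precedes it below -/
import Mathlib

section
/- The Jacobi theta constants θ₀(τ) = Σ_{n∈ℤ} exp(πi n² τ) and θ₁(τ) = Σ_{n∈ℤ} exp(πi(n² τ + n)), for τ in the upper half plane, satisfy the 2τ-formulas θ₀(2τ)² = (θ₀(τ)² + θ₁(τ)²)/2 and θ₁(2τ)² = θ₀(τ)·θ₁(τ). -/
open Filter

noncomputable def jacobiTheta' (i : ℕ) (τ : ℂ) : ℂ :=
  ∑' n : ℤ, Complex.exp (Real.pi * Complex.I * ((n : ℂ) ^ 2 * τ + (i : ℂ) * (n : ℂ)))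

open Complex

/-! Write `θ(z, τ) = ∑ₙ exp(2πinz + πin²τ)` (`jacobiTheta₂`), so that `θᵢ(τ) = θ(i/2, τ)`.
Multiplying two such series at `2τ` and substituting `m = a + b`, `n = a - b`, which maps `ℤ²`
bijectively onto the pairs with `m + n` even, gives the duplication formula
`θ(u + v, 2τ) θ(u - v, 2τ) = (θ(u, τ) θ(v, τ) + θ(u + 1/2, τ) θ(v + 1/2, τ)) / 2`:
shifting both arguments by `1/2` multiplies the `(m, n)` term by `(-1)^(m + n)`, and averaging
the two products cuts out the parity condition. The two formulas are the cases `(u, v) = (0, 0)`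
and `(1/2, 0)`, using `θ(1, τ) = θ(0, τ)`. -/

lemma jacobiTheta'_eq_jacobiTheta₂ (i : ℕ) (τ : ℂ) :
    jacobiTheta' i τ = jacobiTheta₂ (i / 2) τ :=
  tsum_congr fun n => by rw [jacobiTheta₂_term]; ring_nf

lemma jacobiTheta₂_term_add_half (n : ℤ) (z τ : ℂ) :
    jacobiTheta₂_term n (z + 1 / 2) τ = (-1) ^ n * jacobiTheta₂_term n z τ := by
  rw [jacobiTheta₂_term, jacobiTheta₂_term, ← exp_pi_mul_I, ← exp_int_mul, ← Complex.exp_add]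
  ring_nf

lemma jacobiTheta₂_term_add_mul_jacobiTheta₂_term_sub_two_mul (a b : ℤ) (u v τ : ℂ) :
    jacobiTheta₂_term a (u + v) (2 * τ) * jacobiTheta₂_term b (u - v) (2 * τ) =
      jacobiTheta₂_term (a + b) u τ * jacobiTheta₂_term (a - b) v τ := by
  simp only [jacobiTheta₂_term, ← Complex.exp_add]
  push_cast
  ring_nf

lemma summable_norm_jacobiTheta₂_term (z : ℂ) {τ : ℂ} (hτ : 0 < τ.im) :
    Summable fun n : ℤ => ‖jacobiTheta₂_term n z τ‖ :=
  summable_norm_iff.mpr ((summable_jacobiTheta₂_term_iff z τ).mpr hτ)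

lemma jacobiTheta₂_mul_jacobiTheta₂_eq_tsum (z w : ℂ) {τ : ℂ} (hτ : 0 < τ.im) :
    jacobiTheta₂ z τ * jacobiTheta₂ w τ =
      ∑' p : ℤ × ℤ, jacobiTheta₂_term p.1 z τ * jacobiTheta₂_term p.2 w τ :=
  tsum_mul_tsum_of_summable_norm (summable_norm_jacobiTheta₂_term z hτ)
    (summable_norm_jacobiTheta₂_term w hτ)

lemma tsum_comp_add_sub_eq_tsum_indicator_even {M : Type*} [AddCommMonoid M] [TopologicalSpace M]
    (F : ℤ × ℤ → M) :
    ∑' p : ℤ × ℤ, F (p.1 + p.2, p.1 - p.2) =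
      ∑' p : ℤ × ℤ, {p : ℤ × ℤ | Even (p.1 + p.2)}.indicator F p := by
  have hinj : Function.Injective fun p : ℤ × ℤ => (p.1 + p.2, p.1 - p.2) := by
    rintro ⟨a, b⟩ ⟨c, d⟩ h
    simp only [Prod.mk.injEq] at h
    ext <;> omega
  rw [← hinj.tsum_eq (f := {p : ℤ × ℤ | Even (p.1 + p.2)}.indicator F)]
  · exact tsum_congr fun p => (Set.indicator_of_mem (s := {p : ℤ × ℤ | Even (p.1 + p.2)})
      ⟨p.1, by ring⟩ F).symm
  · rintro ⟨m, n⟩ hsupp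
    obtain ⟨r, hr⟩ : (m, n) ∈ {p : ℤ × ℤ | Even (p.1 + p.2)} :=
      Set.support_indicator_subset hsupp
    exact ⟨(r, m - r), by simp only [Prod.mk.injEq]; omega⟩

lemma indicator_setOf_even_add {K : Type*} [DivisionRing K] [CharZero K] (F : ℤ × ℤ → K)
    (p : ℤ × ℤ) :
    {p : ℤ × ℤ | Even (p.1 + p.2)}.indicator F p = (F p + (-1) ^ (p.1 + p.2) * F p) / 2 := by
  by_cases h : Even (p.1 + p.2)
  · rw [Set.indicator_of_mem (s := {p : ℤ × ℤ | Even (p.1 + p.2)}) h, h.neg_one_zpow, one_mul,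
      add_self_div_two]
  · rw [Set.indicator_of_notMem (s := {p : ℤ × ℤ | Even (p.1 + p.2)}) h,
      (Int.not_even_iff_odd.mp h).neg_one_zpow, neg_one_mul, add_neg_cancel, zero_div]

theorem jacobiTheta₂_add_mul_jacobiTheta₂_sub_two_mul (u v : ℂ) {τ : ℂ} (hτ : 0 < τ.im) :
    jacobiTheta₂ (u + v) (2 * τ) * jacobiTheta₂ (u - v) (2 * τ) =
      (jacobiTheta₂ u τ * jacobiTheta₂ v τ +
        jacobiTheta₂ (u + 1 / 2) τ * jacobiTheta₂ (v + 1 / 2) τ) / 2 := by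
  have hsum (x y : ℂ) :
      Summable fun p : ℤ × ℤ => jacobiTheta₂_term p.1 x τ * jacobiTheta₂_term p.2 y τ :=
    summable_mul_of_summable_norm (f := (jacobiTheta₂_term · x τ))
      (g := (jacobiTheta₂_term · y τ)) (summable_norm_jacobiTheta₂_term x hτ)
      (summable_norm_jacobiTheta₂_term y hτ)
  calc jacobiTheta₂ (u + v) (2 * τ) * jacobiTheta₂ (u - v) (2 * τ)
      = ∑' p : ℤ × ℤ, jacobiTheta₂_term (p.1 + p.2) u τ * jacobiTheta₂_term (p.1 - p.2) v τ := by
        rw [jacobiTheta₂_mul_jacobiTheta₂_eq_tsum _ _ (by simpa using hτ)]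
        exact tsum_congr fun p =>
          jacobiTheta₂_term_add_mul_jacobiTheta₂_term_sub_two_mul _ _ _ _ _
    _ = ∑' p : ℤ × ℤ, (jacobiTheta₂_term p.1 u τ * jacobiTheta₂_term p.2 v τ +
          jacobiTheta₂_term p.1 (u + 1 / 2) τ * jacobiTheta₂_term p.2 (v + 1 / 2) τ) / 2 := by
        rw [tsum_comp_add_sub_eq_tsum_indicator_even fun p =>
          jacobiTheta₂_term p.1 u τ * jacobiTheta₂_term p.2 v τ]
        refine tsum_congr fun p => ?_
        rw [indicator_setOf_even_add, jacobiTheta₂_term_add_half, jacobiTheta₂_term_add_half,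
          zpow_add₀ (by norm_num)]
        ring
    _ = _ := by
        rw [tsum_div_const, (hsum u v).tsum_add (hsum _ _), jacobiTheta₂_mul_jacobiTheta₂_eq_tsum
          u v hτ, jacobiTheta₂_mul_jacobiTheta₂_eq_tsum _ _ hτ]

theorem stmt_6 (τ : ℂ) (hτ : 0 < τ.im) :
    jacobiTheta' 0 (2 * τ) ^ 2 = (jacobiTheta' 0 τ ^ 2 + jacobiTheta' 1 τ ^ 2) / 2 ∧
    jacobiTheta' 1 (2 * τ) ^ 2 = jacobiTheta' 0 τ * jacobiTheta' 1 τ := by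
  have h00 := jacobiTheta₂_add_mul_jacobiTheta₂_sub_two_mul 0 0 hτ
  have h11 := jacobiTheta₂_add_mul_jacobiTheta₂_sub_two_mul (1 / 2) 0 hτ
  have hperiod : jacobiTheta₂ (1 / 2 + 1 / 2) τ = jacobiTheta₂ 0 τ := by
    rw [add_halves, ← zero_add 1, jacobiTheta₂_add_left]
  simp only [add_zero, sub_zero, zero_add, hperiod] at h00 h11
  simp only [jacobiTheta'_eq_jacobiTheta₂, Nat.cast_zero, Nat.cast_one, zero_div]
  rw [sq, sq, sq, sq, h00, h11]
  constructor <;> ring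
end

section
/- If 0 < a₁ < a₀ and τ = it with t > 0 satisfies θ₁(τ)²/θ₀(τ)² = a₁/a₀, then a₀/μ₁(a₀, a₁) = θ₀(τ)². -/
open Filter

noncomputable def agmSeq (a0 a1 : ℝ) : ℕ → ℝ × ℝ
  | 0 => (a0, a1)
  | n + 1 => (((agmSeq a0 a1 n).1 + (agmSeq a0 a1 n).2) / 2,
      Real.sqrt ((agmSeq a0 a1 n).1 * (agmSeq a0 a1 n).2))

/-!
Write `θᵢ(t)` for the theta constant at `τ = it`, and let `c = a₀ / θ₀(t)²`, so that
`(a₀, a₁) = c • (θ₀(t)², θ₁(t)²)`. The duplication formulas `θ₀(t)² + θ₁(t)² = 2 θ₀(2t)²` and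
`θ₀(t) θ₁(t) = θ₁(2t)²` say that one step of the AGM replaces `t` by `2t`, so the `k`-th AGM
iterate is `c • (θ₀(2ᵏt)², θ₁(2ᵏt)²)`. Both theta constants tend to `1` as `t → ∞` (only the
`n = 0` term survives), hence the AGM limit is `c`.
The duplication formulas come from multiplying the series and reindexing the pairs `(m, n)` with
`m + n` even as `(r + s, r - s)`, using `(r + s)² + (r - s)² = 2 (r² + s²)`; pairs with `m + n`
odd cancel.
-/

open Real Topology

noncomputable def thetaConstTerm (i : ℕ) (t : ℝ) (n : ℤ) : ℝ :=
  (-1) ^ ((i : ℤ) * n) * rexp (-π * n ^ 2 * t)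

noncomputable def thetaConst (i : ℕ) (t : ℝ) : ℝ := ∑' n : ℤ, thetaConstTerm i t n

theorem jacobiTheta'_mul_I (i : ℕ) (t : ℝ) :
    jacobiTheta' i (t * Complex.I) = thetaConst i t := by
  rw [jacobiTheta', thetaConst, Complex.ofReal_tsum]
  refine tsum_congr fun n => ?_
  have h : π * Complex.I * (n ^ 2 * (t * Complex.I) + i * n)
      = ↑(-π * n ^ 2 * t) + ((i * n : ℤ) : ℂ) * (π * Complex.I) := by
    push_cast
    ring_nf
    simp only [Complex.I_sq]
    ring
  rw [h, Complex.exp_add, Complex.exp_int_mul, Complex.exp_pi_mul_I, thetaConstTerm,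
    ← Complex.ofReal_exp]
  push_cast
  ring

section

variable (i : ℕ) (t : ℝ) (n : ℤ)

@[simp]
theorem thetaConstTerm_zero_left : thetaConstTerm 0 t n = rexp (-π * n ^ 2 * t) := by
  simp [thetaConstTerm]

@[simp]
theorem thetaConstTerm_one_left : thetaConstTerm 1 t n = (-1) ^ n * rexp (-π * n ^ 2 * t) := by
  simp [thetaConstTerm]

@[simp]
theorem thetaConstTerm_zero_right : thetaConstTerm i t 0 = 1 := by
  simp [thetaConstTerm]

theorem norm_thetaConstTerm : ‖thetaConstTerm i t n‖ = rexp (-π * n ^ 2 * t) := by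
  rw [thetaConstTerm, norm_mul, norm_zpow, norm_neg, norm_one, one_zpow, one_mul,
    Real.norm_of_nonneg (exp_pos _).le]

end

theorem summable_exp_neg_pi_mul_sq {t : ℝ} (ht : 0 < t) :
    Summable fun n : ℤ => rexp (-π * n ^ 2 * t) :=
  (summable_pow_mul_jacobiTheta₂_term_bound 0 ht 0).congr fun n => by ring_nf

theorem summable_norm_thetaConstTerm (i : ℕ) {t : ℝ} (ht : 0 < t) :
    Summable fun n => ‖thetaConstTerm i t n‖ := by
  simpa only [norm_thetaConstTerm] using summable_exp_neg_pi_mul_sq ht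

theorem hasSum_thetaConstTerm_mul (i j : ℕ) {t : ℝ} (ht : 0 < t) :
    HasSum (fun p : ℤ × ℤ => thetaConstTerm i t p.1 * thetaConstTerm j t p.2)
      (thetaConst i t * thetaConst j t) :=
  (summable_norm_thetaConstTerm i ht).of_norm.hasSum.mul
    (summable_norm_thetaConstTerm j ht).of_norm.hasSum
    (summable_mul_of_summable_norm (summable_norm_thetaConstTerm i ht)
      (summable_norm_thetaConstTerm j ht))

theorem hasSum_comp_add_sub_iff {M : Type*} [AddCommMonoid M] [TopologicalSpace M]
    {f : ℤ × ℤ → M} {a : M} (hf : ∀ m n : ℤ, Odd (m + n) → f (m, n) = 0) :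
    HasSum (fun p : ℤ × ℤ => f (p.1 + p.2, p.1 - p.2)) a ↔ HasSum f a := by
  refine Function.Injective.hasSum_iff (g := fun p : ℤ × ℤ => (p.1 + p.2, p.1 - p.2))
    (fun p q h => by simp only [Prod.ext_iff] at h ⊢; omega) fun ⟨m, n⟩ hmn => hf m n ?_
  rw [← Int.not_even_iff_odd]
  rintro ⟨k, hk⟩
  exact hmn ⟨(k, m - k), by simp only [Prod.ext_iff]; omega⟩

theorem exp_add_sq_mul_exp_sub_sq (c r s : ℝ) :
    rexp (-π * (r + s) ^ 2 * c) * rexp (-π * (r - s) ^ 2 * c)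
      = rexp (-π * r ^ 2 * (2 * c)) * rexp (-π * s ^ 2 * (2 * c)) := by
  rw [← exp_add, ← exp_add]
  ring_nf

theorem neg_one_zpow_add_neg_one_zpow_of_odd {K : Type*} [Field K] {m n : ℤ}
    (h : Odd (m + n)) : (-1 : K) ^ m + (-1) ^ n = 0 := by
  have hnm : Odd (n - m) := by
    rw [show n - m = m + n - 2 * m by ring]
    exact h.sub_even (even_two_mul m)
  rw [show n = m + (n - m) by ring, zpow_add₀ (by norm_num), hnm.neg_one_zpow]
  ring

theorem neg_one_zpow_sub_eq_add {K : Type*} [Field K] (r s : ℤ) :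
    (-1 : K) ^ (r - s) = (-1) ^ (r + s) := by
  rw [show r + s = r - s + 2 * s by ring, zpow_add₀ (by norm_num), zpow_mul]
  norm_num

theorem thetaConst_zero_sq_add_thetaConst_one_sq {t : ℝ} (ht : 0 < t) :
    thetaConst 0 t ^ 2 + thetaConst 1 t ^ 2 = 2 * thetaConst 0 (2 * t) ^ 2 := by
  have h := (hasSum_thetaConstTerm_mul 0 0 ht).add (hasSum_thetaConstTerm_mul 1 1 ht)
  rw [← hasSum_comp_add_sub_iff fun m n hmn => by
    simp only [thetaConstTerm_zero_left, thetaConstTerm_one_left]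
    rw [mul_mul_mul_comm, ← zpow_add₀ (by norm_num), hmn.neg_one_zpow]
    ring] at h
  have h2 := (hasSum_thetaConstTerm_mul 0 0 (by positivity : 0 < 2 * t)).mul_left 2
  rw [sq, sq, sq]
  refine h.unique (h2.congr_fun fun ⟨r, s⟩ => ?_)
  have hsign : (-1 : ℝ) ^ (r + s) * (-1) ^ (r - s) = 1 := by
    rw [← zpow_add₀ (by norm_num)]
    exact Even.neg_one_zpow ⟨r, by ring⟩
  simp only [thetaConstTerm_zero_left, thetaConstTerm_one_left]
  push_cast
  linear_combination 2 * exp_add_sq_mul_exp_sub_sq t r s +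
    rexp (-π * (r + s) ^ 2 * t) * rexp (-π * (r - s) ^ 2 * t) * hsign

theorem thetaConst_zero_mul_thetaConst_one {t : ℝ} (ht : 0 < t) :
    thetaConst 0 t * thetaConst 1 t = thetaConst 1 (2 * t) ^ 2 := by
  have h := (hasSum_thetaConstTerm_mul 0 1 ht).add (hasSum_thetaConstTerm_mul 1 0 ht)
  rw [← hasSum_comp_add_sub_iff fun m n hmn => by
    simp only [thetaConstTerm_zero_left, thetaConstTerm_one_left]
    linear_combination rexp (-π * m ^ 2 * t) * rexp (-π * n ^ 2 * t) *
      neg_one_zpow_add_neg_one_zpow_of_odd (K := ℝ) hmn] at h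
  have h2 := (hasSum_thetaConstTerm_mul 1 1 (by positivity : 0 < 2 * t)).mul_left 2
  have := h.unique (h2.congr_fun fun ⟨r, s⟩ => ?_)
  · linarith
  simp only [thetaConstTerm_zero_left, thetaConstTerm_one_left]
  push_cast
  rw [neg_one_zpow_sub_eq_add, zpow_add₀ (by norm_num)]
  linear_combination 2 * (-1 : ℝ) ^ r * (-1) ^ s * exp_add_sq_mul_exp_sub_sq t r s

theorem tendsto_thetaConst_atTop (i : ℕ) : Tendsto (thetaConst i) atTop (𝓝 1) := by
  have hlim (n : ℤ) :
      Tendsto (fun s => thetaConstTerm i s n) atTop (𝓝 (if n = 0 then 1 else 0)) := by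
    split_ifs with hn
    · simp only [hn, thetaConstTerm_zero_right, tendsto_const_nhds]
    have hneg : -π * (n : ℝ) ^ 2 < 0 := by
      have : (n : ℝ) ≠ 0 := by exact_mod_cast hn
      nlinarith [pi_pos, sq_pos_of_ne_zero this]
    simpa [thetaConstTerm] using
      ((tendsto_exp_atBot.comp (tendsto_id.const_mul_atTop_of_neg hneg)).const_mul
        ((-1 : ℝ) ^ ((i : ℤ) * n)))
  have hbound : ∀ᶠ s in atTop, ∀ n, ‖thetaConstTerm i s n‖ ≤ rexp (-π * n ^ 2 * 1) := by
    filter_upwards [eventually_ge_atTop 1] with s hs n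
    rw [norm_thetaConstTerm, exp_le_exp]
    nlinarith [mul_nonneg (mul_nonneg pi_pos.le (sq_nonneg (n : ℝ))) (sub_nonneg.2 hs)]
  have h := tendsto_tsum_of_dominated_convergence (summable_exp_neg_pi_mul_sq one_pos) hlim hbound
  rwa [tsum_ite_eq] at h

theorem tendsto_thetaConst_two_pow_mul (i : ℕ) {t : ℝ} (ht : 0 < t) :
    Tendsto (fun k : ℕ => thetaConst i (2 ^ k * t)) atTop (𝓝 1) :=
  (tendsto_thetaConst_atTop i).comp
    ((tendsto_pow_atTop_atTop_of_one_lt one_lt_two).atTop_mul_const ht)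

theorem thetaConst_zero_pos {t : ℝ} (ht : 0 < t) : 0 < thetaConst 0 t := by
  refine (summable_norm_thetaConstTerm 0 ht).of_norm.tsum_pos (fun n => ?_) 0 (by simp)
  simpa using (exp_pos _).le

theorem thetaConst_one_nonneg {t : ℝ} (ht : 0 < t) : 0 ≤ thetaConst 1 t :=
  nonneg_of_mul_nonneg_right (by rw [thetaConst_zero_mul_thetaConst_one ht]; positivity)
    (thetaConst_zero_pos ht)

theorem thetaConst_one_pos {t : ℝ} (ht : 0 < t) : 0 < thetaConst 1 t := by
  refine (thetaConst_one_nonneg ht).lt_of_ne' fun h0 => ?_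
  have hzero (k : ℕ) : thetaConst 1 (2 ^ k * t) = 0 := by
    induction k with
    | zero => simpa using h0
    | succ k ih =>
      have := thetaConst_zero_mul_thetaConst_one (by positivity : 0 < 2 ^ k * t)
      rw [ih, mul_zero, ← mul_assoc, ← pow_succ'] at this
      exact pow_eq_zero_iff two_ne_zero |>.mp this.symm
  have := tendsto_thetaConst_two_pow_mul 1 ht
  simp only [hzero] at this
  exact zero_ne_one (tendsto_nhds_unique tendsto_const_nhds this)

theorem agmSeq_mul_thetaConst_sq {c t : ℝ} (hc : 0 ≤ c) (ht : 0 < t) (k : ℕ) :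
    agmSeq (c * thetaConst 0 t ^ 2) (c * thetaConst 1 t ^ 2) k =
      (c * thetaConst 0 (2 ^ k * t) ^ 2, c * thetaConst 1 (2 ^ k * t) ^ 2) := by
  induction k with
  | zero => simp [agmSeq]
  | succ k ih =>
    have hk : 0 < 2 ^ k * t := by positivity
    rw [agmSeq, ih, show (2 : ℝ) ^ (k + 1) * t = 2 * (2 ^ k * t) by ring]
    ext <;> dsimp only
    · linear_combination (c / 2) * thetaConst_zero_sq_add_thetaConst_one_sq hk
    · rw [show c * thetaConst 0 (2 ^ k * t) ^ 2 * (c * thetaConst 1 (2 ^ k * t) ^ 2)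
          = (c * (thetaConst 0 (2 ^ k * t) * thetaConst 1 (2 ^ k * t))) ^ 2 by ring,
        sqrt_sq (mul_nonneg hc (mul_pos (thetaConst_zero_pos hk) (thetaConst_one_pos hk)).le),
        thetaConst_zero_mul_thetaConst_one hk]

theorem tendsto_agmSeq_fst_mul_thetaConst_sq {c t : ℝ} (hc : 0 ≤ c) (ht : 0 < t) :
    Tendsto (fun k => (agmSeq (c * thetaConst 0 t ^ 2) (c * thetaConst 1 t ^ 2) k).1)
      atTop (𝓝 c) := by
  simp only [agmSeq_mul_thetaConst_sq hc ht]
  simpa using ((tendsto_thetaConst_two_pow_mul 0 ht).pow 2).const_mul c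

theorem stmt_9_general (a0 a1 t : ℝ) (h1 : 0 < a1) (h2 : a1 < a0) (ht : 0 < t)
    (hratio : jacobiTheta' 1 (t * Complex.I) ^ 2 / jacobiTheta' 0 (t * Complex.I) ^ 2 =
      (a1 : ℂ) / (a0 : ℂ))
    (l : ℝ)
    (hl0 : Tendsto (fun n => (agmSeq a0 a1 n).1) atTop (nhds l)) :
    ((a0 / l : ℝ) : ℂ) = jacobiTheta' 0 (t * Complex.I) ^ 2 := by
  simp only [jacobiTheta'_mul_I] at hratio ⊢
  norm_cast at hratio ⊢
  have ha0 : 0 < a0 := h1.trans h2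
  have hθ0 := thetaConst_zero_pos ht
  obtain ⟨c, hc, rfl, rfl⟩ :
      ∃ c, 0 < c ∧ a0 = c * thetaConst 0 t ^ 2 ∧ a1 = c * thetaConst 1 t ^ 2 := by
    refine ⟨a0 / thetaConst 0 t ^ 2, by positivity, by field_simp, ?_⟩
    field_simp at hratio ⊢
    linarith
  rw [tendsto_nhds_unique hl0 (tendsto_agmSeq_fst_mul_thetaConst_sq hc.le ht)]
  field_simp

theorem stmt_9 (a0 a1 t : ℝ) (h1 : 0 < a1) (h2 : a1 < a0) (ht : 0 < t)
    (hratio : jacobiTheta' 1 (t * Complex.I) ^ 2 / jacobiTheta' 0 (t * Complex.I) ^ 2 =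
      (a1 : ℂ) / (a0 : ℂ))
    (l : ℝ)
    (hl0 : Tendsto (fun n => (agmSeq a0 a1 n).1) atTop (nhds l))
    (hl1 : Tendsto (fun n => (agmSeq a0 a1 n).2) atTop (nhds l)) :
    ((a0 / l : ℝ) : ℂ) = jacobiTheta' 0 (t * Complex.I) ^ 2 :=
  stmt_9_general a0 a1 t h1 h2 ht hratio l hl0
end
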